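/- If a positive semidefinite n×n matrix K̃ satisfies the algebraic Riccati equation K̃ = π(E[N₁ + A₁ᵀ K̃ A₁]), then the Riccati iteration K_0 = O, K_{t+1} = π(E[N₁ + A₁ᵀ K_t A₁]) satisfies K_t ≤ K̃ in the Loewner order for every t ≥ 0. -/

import Mathlib

open MeasureTheory Matrix Filter ProbabilityTheory
open scoped ENNReal NNReal

noncomputable section

instance matrixMeasurableSpace {I J : Type*} : MeasurableSpace (Matrix I J ℝ) :=
  inferInstanceAs (MeasurableSpace (I → J → ℝ))

/-- The Schur-complement map `π(P) = P_xx − P_xu P_uu⁻¹ P_ux`. -/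
def piMap {n m : ℕ} (P : Matrix (Fin n ⊕ Fin m) (Fin n ⊕ Fin m) ℝ) :
    Matrix (Fin n) (Fin n) ℝ :=
  P.toBlocks₁₁ - P.toBlocks₁₂ * P.toBlocks₂₂⁻¹ * P.toBlocks₂₁

/-- The feedback-gain map `Γ(P) = −P_uu⁻¹ P_ux`. -/
def gammaMap {n m : ℕ} (P : Matrix (Fin n ⊕ Fin m) (Fin n ⊕ Fin m) ℝ) :
    Matrix (Fin m) (Fin n) ℝ :=
  -(P.toBlocks₂₂⁻¹ * P.toBlocks₂₁)

/-- Loewner order: `X ≤ Y` iff `Y - X` is positive semidefinite. -/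
def loewnerLE {I : Type*} [Fintype I] (X Y : Matrix I I ℝ) : Prop :=
  (Y - X).PosSemidef

/-- Spectral norm (`2`-norm) of a real matrix. -/
def specNorm {I J : Type*} [Fintype I] [Fintype J] [DecidableEq J]
    (M : Matrix I J ℝ) : ℝ :=
  ‖LinearMap.toContinuousLinearMap (Matrix.toEuclideanLin M)‖

/-- Entrywise expectation of a random matrix. -/
def matExp {Ω : Type*} [MeasurableSpace Ω] (μpr : Measure Ω) {I J : Type*}
    (M : Ω → Matrix I J ℝ) : Matrix I J ℝ :=
  Matrix.of fun i j => ∫ ω, M ω i j ∂μpr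

section LQ

variable {n m : ℕ} {Ω : Type*} [MeasurableSpace Ω]

/-- The filtration `𝓕_t = σ(A_s, N_s : 1 ≤ s ≤ t)` (with `𝓕_0` trivial). -/
def lqFiltration (A : ℕ → Ω → Matrix (Fin n) (Fin n ⊕ Fin m) ℝ)
    (N : ℕ → Ω → Matrix (Fin n ⊕ Fin m) (Fin n ⊕ Fin m) ℝ) :
    ℕ → MeasurableSpace Ω := fun t =>
  ⨆ s ∈ Finset.Icc 1 t, MeasurableSpace.comap (fun ω => (A s ω, N s ω)) inferInstance

/-- A control is admissible if it is adapted to the filtration. -/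
def Admissible {k : ℕ} (F : ℕ → MeasurableSpace Ω) (u : ℕ → Ω → Fin k → ℝ) : Prop :=
  ∀ t, @Measurable Ω (Fin k → ℝ) (F t) _ (u t)

/-- The state process `x_0 = x`, `x_{t+1} = A_{t+1} [x_t; u_t]`. -/
def statePath (A : ℕ → Ω → Matrix (Fin n) (Fin n ⊕ Fin m) ℝ)
    (x : Fin n → ℝ) (u : ℕ → Ω → Fin m → ℝ) : ℕ → Ω → Fin n → ℝ
  | 0 => fun _ => x
  | t + 1 => fun ω => A (t + 1) ω *ᵥ Sum.elim (statePath A x u t ω) (u t ω)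

/-- The stage cost `[x_tᵀ, u_tᵀ] N_{t+1} [x_t; u_t]`. -/
def stageCost (A : ℕ → Ω → Matrix (Fin n) (Fin n ⊕ Fin m) ℝ)
    (N : ℕ → Ω → Matrix (Fin n ⊕ Fin m) (Fin n ⊕ Fin m) ℝ)
    (x : Fin n → ℝ) (u : ℕ → Ω → Fin m → ℝ) (t : ℕ) (ω : Ω) : ℝ :=
  Sum.elim (statePath A x u t ω) (u t ω) ⬝ᵥ
    (N (t + 1) ω *ᵥ Sum.elim (statePath A x u t ω) (u t ω))

/-- The total cost `J(x, u) ∈ [0,∞]`. -/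
def costJ (A : ℕ → Ω → Matrix (Fin n) (Fin n ⊕ Fin m) ℝ)
    (N : ℕ → Ω → Matrix (Fin n ⊕ Fin m) (Fin n ⊕ Fin m) ℝ)
    (x : Fin n → ℝ) (u : ℕ → Ω → Fin m → ℝ) (ω : Ω) : ℝ≥0∞ :=
  ∑' t, ENNReal.ofReal (stageCost A N x u t ω)

/-- The value function `V(x) = inf over admissible u of E[J(x,u)]`. -/
def valueV (μpr : Measure Ω) (A : ℕ → Ω → Matrix (Fin n) (Fin n ⊕ Fin m) ℝ)
    (N : ℕ → Ω → Matrix (Fin n ⊕ Fin m) (Fin n ⊕ Fin m) ℝ)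
    (x : Fin n → ℝ) : ℝ≥0∞ :=
  ⨅ (u : ℕ → Ω → Fin m → ℝ) (_ : Admissible (lqFiltration A N) u),
    ∫⁻ ω, costJ A N x u ω ∂μpr

/-- The Riccati iteration `K_0 = O`, `K_{t+1} = π(E[N₁ + A₁ᵀ K_t A₁])`. -/
def Kseq (μpr : Measure Ω) (A : ℕ → Ω → Matrix (Fin n) (Fin n ⊕ Fin m) ℝ)
    (N : ℕ → Ω → Matrix (Fin n ⊕ Fin m) (Fin n ⊕ Fin m) ℝ) :
    ℕ → Matrix (Fin n) (Fin n) ℝ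
  | 0 => 0
  | t + 1 => piMap (matExp μpr (fun ω => N 1 ω + (A 1 ω)ᵀ * Kseq μpr A N t * A 1 ω))

/-- The Q-learning process of Algorithm 1. -/
def Qproc (A : ℕ → Ω → Matrix (Fin n) (Fin n ⊕ Fin m) ℝ)
    (N : ℕ → Ω → Matrix (Fin n ⊕ Fin m) (Fin n ⊕ Fin m) ℝ)
    (α : ℕ → Ω → ℝ) (Q0 : Matrix (Fin n ⊕ Fin m) (Fin n ⊕ Fin m) ℝ) :
    ℕ → Ω → Matrix (Fin n ⊕ Fin m) (Fin n ⊕ Fin m) ℝ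
  | 0 => fun _ => Q0
  | t + 1 => fun ω =>
      Qproc A N α Q0 t ω + α t ω •
        (N (t + 1) ω + (A (t + 1) ω)ᵀ * piMap (Qproc A N α Q0 t ω) * A (t + 1) ω
          - Qproc A N α Q0 t ω)

end LQ

/-!
Completing the square shows that `π(P)` is the least closed-loop cost `[I; G]ᵀ P [I; G]` over
all gains `G`, attained at `G = Γ(P)`; hence `π` is monotone in the Loewner order. The map
`K ↦ E[N₁ + A₁ᵀ K A₁]` is monotone as well, and it sends positive semidefinite `K` to positive
definite matrices because `E[N₁]` is positive definite. By induction every `K_t` is positive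
semidefinite with `K_t ≤ K̃`, since `K_{t+1} = π(E[N₁ + A₁ᵀ K_t A₁]) ≤ π(E[N₁ + A₁ᵀ K̃ A₁]) = K̃`.
-/

namespace Matrix

section Schur

variable {n m : ℕ}

lemma PosSemidef.transpose_mul_mul_same {ι κ : Type*} [Fintype ι] [Finite κ]
    {K : Matrix ι ι ℝ} (hK : K.PosSemidef) (B : Matrix ι κ ℝ) : (Bᵀ * K * B).PosSemidef := by
  simpa only [conjTranspose_eq_transpose_of_trivial] using hK.conjTranspose_mul_mul_same B

lemma PosDef.toBlocks₂₂ {ι κ R : Type*} [Ring R] [PartialOrder R] [StarRing R]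
    {P : Matrix (ι ⊕ κ) (ι ⊕ κ) R} (hP : P.PosDef) :
    P.toBlocks₂₂.PosDef :=
  hP.submatrix Sum.inr_injective

lemma PosDef.isUnit_det {ι : Type*} [Fintype ι] [DecidableEq ι] {M : Matrix ι ι ℝ}
    (hM : M.PosDef) : IsUnit M.det :=
  (isUnit_iff_isUnit_det M).1 hM.isUnit

def closedLoop (G : Matrix (Fin m) (Fin n) ℝ) : Matrix (Fin n ⊕ Fin m) (Fin n) ℝ :=
  fromRows 1 G

lemma transpose_closedLoop_mul_mul_closedLoop (P : Matrix (Fin n ⊕ Fin m) (Fin n ⊕ Fin m) ℝ)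
    (G : Matrix (Fin m) (Fin n) ℝ) :
    (closedLoop G)ᵀ * P * closedLoop G =
      P.toBlocks₁₁ + Gᵀ * P.toBlocks₂₁ + P.toBlocks₁₂ * G + Gᵀ * P.toBlocks₂₂ * G := by
  conv_lhs => rw [← fromBlocks_toBlocks P]
  rw [closedLoop, transpose_fromRows, fromCols_mul_fromBlocks, fromCols_mul_fromRows]
  simp only [transpose_one, Matrix.one_mul, Matrix.mul_one, Matrix.add_mul, Matrix.mul_assoc]
  abel

lemma transpose_closedLoop_mul_mul_closedLoop_eq_piMap_add
    {P : Matrix (Fin n ⊕ Fin m) (Fin n ⊕ Fin m) ℝ} (hP : P.IsHermitian)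
    (hD : IsUnit P.toBlocks₂₂.det) (G : Matrix (Fin m) (Fin n) ℝ) :
    (closedLoop G)ᵀ * P * closedLoop G =
      piMap P + (G - gammaMap P)ᵀ * P.toBlocks₂₂ * (G - gammaMap P) := by
  rw [transpose_closedLoop_mul_mul_closedLoop, piMap, gammaMap]
  set C := P.toBlocks₂₁
  set D := P.toBlocks₂₂
  have hB : P.toBlocks₁₂ = Cᵀ := by
    rw [← conjTranspose_eq_transpose_of_trivial]
    exact (congr_arg toBlocks₁₂ hP).symm
  have hD' : (D⁻¹)ᵀ = D⁻¹ := by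
    rw [transpose_nonsing_inv, ← conjTranspose_eq_transpose_of_trivial]
    exact congr_arg _ (congr_arg toBlocks₂₂ hP)
  rw [hB, sub_neg_eq_add, transpose_add, transpose_mul, hD']
  simp only [Matrix.add_mul, Matrix.mul_add, Matrix.mul_assoc, mul_nonsing_inv_cancel_left _ _ hD,
    nonsing_inv_mul_cancel_left _ _ hD]
  abel

lemma transpose_closedLoop_gammaMap_mul_mul_closedLoop_gammaMap
    {P : Matrix (Fin n ⊕ Fin m) (Fin n ⊕ Fin m) ℝ} (hP : P.IsHermitian)
    (hD : IsUnit P.toBlocks₂₂.det) :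
    (closedLoop (gammaMap P))ᵀ * P * closedLoop (gammaMap P) = piMap P := by
  simp [transpose_closedLoop_mul_mul_closedLoop_eq_piMap_add hP hD]

lemma PosSemidef.piMap {P : Matrix (Fin n ⊕ Fin m) (Fin n ⊕ Fin m) ℝ} (hP : P.PosSemidef)
    (hD : IsUnit P.toBlocks₂₂.det) : (piMap P).PosSemidef := by
  rw [← transpose_closedLoop_gammaMap_mul_mul_closedLoop_gammaMap hP.isHermitian hD]
  exact hP.transpose_mul_mul_same _

lemma piMap_mono {P Q : Matrix (Fin n ⊕ Fin m) (Fin n ⊕ Fin m) ℝ} (hP : P.IsHermitian)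
    (hDP : P.toBlocks₂₂.PosDef) (hQ : Q.IsHermitian) (hDQ : IsUnit Q.toBlocks₂₂.det)
    (hPQ : loewnerLE P Q) : loewnerLE (piMap P) (piMap Q) := by
  set L := closedLoop (gammaMap Q)
  have hsplit : piMap Q - piMap P =
      Lᵀ * (Q - P) * L + (gammaMap Q - gammaMap P)ᵀ * P.toBlocks₂₂ * (gammaMap Q - gammaMap P) := by
    rw [← transpose_closedLoop_gammaMap_mul_mul_closedLoop_gammaMap hQ hDQ,
      Matrix.mul_sub, Matrix.sub_mul,
      transpose_closedLoop_mul_mul_closedLoop_eq_piMap_add hP hDP.isUnit_det]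
    abel
  rw [loewnerLE, hsplit]
  exact (hPQ.transpose_mul_mul_same L).add (hDP.posSemidef.transpose_mul_mul_same _)

end Schur

section SpecNorm

variable {I J : Type*} [Fintype I] [Fintype J] [DecidableEq J]

open scoped Matrix.Norms.L2Operator

lemma specNorm_nonneg (M : Matrix I J ℝ) : 0 ≤ specNorm M :=
  norm_nonneg M

lemma specNorm_add_le (M M' : Matrix I J ℝ) : specNorm (M + M') ≤ specNorm M + specNorm M' :=
  norm_add_le M M'

lemma abs_apply_le_specNorm (M : Matrix I J ℝ) (i : I) (j : J) : |M i j| ≤ specNorm M := by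
  have hcol : M i j = (M *ᵥ (EuclideanSpace.single j (1 : ℝ)).ofLp) i := by simp
  calc |M i j| ≤ ‖(EuclideanSpace.equiv I ℝ).symm (M *ᵥ (EuclideanSpace.single j 1).ofLp)‖ := by
        rw [hcol, ← Real.norm_eq_abs]
        exact PiLp.norm_apply_le
          ((EuclideanSpace.equiv I ℝ).symm (M *ᵥ (EuclideanSpace.single j (1 : ℝ)).ofLp)) i
    _ ≤ ‖M‖ * ‖EuclideanSpace.single j (1 : ℝ)‖ := l2_opNorm_mulVec M _
    _ = specNorm M := by rw [PiLp.norm_single, norm_one, mul_one]; rfl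

lemma specNorm_transpose_mul_mul_le [DecidableEq I] (B : Matrix I J ℝ) (K : Matrix I I ℝ) :
    specNorm (Bᵀ * K * B) ≤ specNorm K * specNorm (Bᵀ * B) := by
  show ‖Bᵀ * K * B‖ ≤ ‖K‖ * ‖Bᵀ * B‖
  rw [← conjTranspose_eq_transpose_of_trivial, l2_opNorm_conjTranspose_mul_self]
  calc ‖Bᴴ * K * B‖ ≤ ‖Bᴴ‖ * ‖K‖ * ‖B‖ :=
        (l2_opNorm_mul _ _).trans (mul_le_mul_of_nonneg_right (l2_opNorm_mul _ _) (norm_nonneg _))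
    _ = ‖K‖ * (‖B‖ * ‖B‖) := by rw [l2_opNorm_conjTranspose]; ring

end SpecNorm

instance secondCountableTopology {I J : Type*} [Finite I] [Finite J] :
    SecondCountableTopology (Matrix I J ℝ) :=
  inferInstanceAs (SecondCountableTopology (I → J → ℝ))

instance borelSpace {I J : Type*} [Finite I] [Finite J] : BorelSpace (Matrix I J ℝ) :=
  inferInstanceAs (BorelSpace (I → J → ℝ))

end Matrix

section Expectation

variable {Ω : Type*} [MeasurableSpace Ω] {μ : Measure Ω}

lemma matExp_sub {I J : Type*} {f g : Ω → Matrix I J ℝ}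
    (hf : ∀ i j, Integrable (fun ω => f ω i j) μ) (hg : ∀ i j, Integrable (fun ω => g ω i j) μ) :
    matExp μ (fun ω => f ω - g ω) = matExp μ f - matExp μ g := by
  ext i j
  exact integral_sub (hf i j) (hg i j)

lemma dotProduct_matExp_mulVec {I : Type*} [Fintype I] {f : Ω → Matrix I I ℝ}
    (hf : ∀ i j, Integrable (fun ω => f ω i j) μ) (x : I → ℝ) :
    x ⬝ᵥ (matExp μ f *ᵥ x) = ∫ ω, x ⬝ᵥ (f ω *ᵥ x) ∂μ := by
  simp only [dotProduct, mulVec, matExp, of_apply]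
  rw [integral_finsetSum _ fun i _ =>
    (integrable_finsetSum _ fun j _ => (hf i j).mul_const _).const_mul _]
  refine Finset.sum_congr rfl fun i _ => ?_
  rw [integral_const_mul, integral_finsetSum _ fun j _ => (hf i j).mul_const _]
  simp only [integral_mul_const]

lemma matExp_posSemidef {I : Type*} [Fintype I] {f : Ω → Matrix I I ℝ}
    (hf : ∀ i j, Integrable (fun ω => f ω i j) μ) (hpsd : ∀ ω, (f ω).PosSemidef) :
    (matExp μ f).PosSemidef := by
  refine PosSemidef.of_dotProduct_mulVec_nonneg ?_ fun x => ?_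
  · ext i j
    simp only [conjTranspose_apply, star_trivial, matExp, of_apply]
    exact integral_congr_ae (ae_of_all _ fun ω => (hpsd ω).isHermitian.apply i j)
  · rw [star_trivial, dotProduct_matExp_mulVec hf]
    exact integral_nonneg fun ω => (hpsd ω).dotProduct_mulVec_nonneg x

lemma loewnerLE_matExp {I : Type*} [Fintype I] {f g : Ω → Matrix I I ℝ}
    (hf : ∀ i j, Integrable (fun ω => f ω i j) μ) (hg : ∀ i j, Integrable (fun ω => g ω i j) μ)
    (hfg : ∀ ω, loewnerLE (f ω) (g ω)) : loewnerLE (matExp μ f) (matExp μ g) := by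
  rw [loewnerLE, ← matExp_sub hg hf]
  exact matExp_posSemidef (fun i j => (hg i j).sub (hf i j)) hfg

lemma integrable_apply_of_specNorm_le {I J : Type*} [Fintype I] [Fintype J] [DecidableEq J]
    {f : Ω → Matrix I J ℝ} {g : Ω → ℝ} (hf : Measurable f) (hg : Integrable g μ)
    (hfg : ∀ ω, specNorm (f ω) ≤ g ω) (i : I) (j : J) : Integrable (fun ω => f ω i j) μ :=
  hg.mono' ((measurable_pi_apply j).comp ((measurable_pi_apply i).comp hf)).aestronglyMeasurable
    (ae_of_all _ fun ω => (abs_apply_le_specNorm _ i j).trans (hfg ω))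

end Expectation

section QMatrix

variable {Ω : Type*} [MeasurableSpace Ω] {μ : Measure Ω} {ι κ : Type*} [Fintype ι] [Fintype κ]

/-- The matrix of the Q-function belonging to the cost-to-go matrix `K`. -/
def qMatrix (μ : Measure Ω) (A : Ω → Matrix ι κ ℝ) (N : Ω → Matrix κ κ ℝ) (K : Matrix ι ι ℝ) :
    Matrix κ κ ℝ :=
  matExp μ fun ω => N ω + (A ω)ᵀ * K * A ω

variable [DecidableEq ι] [DecidableEq κ] [IsFiniteMeasure μ]
  {A : Ω → Matrix ι κ ℝ} {N : Ω → Matrix κ κ ℝ}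
  (hAN : Measurable fun ω => (A ω, N ω))
  (hmom : Integrable (fun ω => specNorm (N ω) ^ 2 + specNorm ((A ω)ᵀ * A ω) ^ 2) μ)
include hAN hmom

lemma integrable_qMatrix_integrand_apply (K : Matrix ι ι ℝ) (i j : κ) :
    Integrable (fun ω => (N ω + (A ω)ᵀ * K * A ω) i j) μ := by
  have hcont : Continuous fun p : Matrix ι κ ℝ × Matrix κ κ ℝ => p.2 + p.1ᵀ * K * p.1 := by
    fun_prop
  refine integrable_apply_of_specNorm_le (hcont.measurable.comp hAN)
    (((integrable_const 1).add hmom).const_mul (1 + specNorm K)) (fun ω => ?_) i j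
  set a := specNorm (N ω)
  set b := specNorm ((A ω)ᵀ * A ω)
  have ha : a ≤ 1 + (a ^ 2 + b ^ 2) := by nlinarith [sq_nonneg (a - 1), sq_nonneg a, sq_nonneg b]
  have hb : b ≤ 1 + (a ^ 2 + b ^ 2) := by nlinarith [sq_nonneg (b - 1), sq_nonneg a, sq_nonneg b]
  calc specNorm (N ω + (A ω)ᵀ * K * A ω) ≤ a + specNorm K * b :=
        (specNorm_add_le _ _).trans (add_le_add le_rfl (specNorm_transpose_mul_mul_le _ _))
    _ ≤ 1 + (a ^ 2 + b ^ 2) + specNorm K * (1 + (a ^ 2 + b ^ 2)) :=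
        add_le_add ha (mul_le_mul_of_nonneg_left hb (specNorm_nonneg K))
    _ = (1 + specNorm K) * (1 + (a ^ 2 + b ^ 2)) := by ring

lemma qMatrix_mono {K K' : Matrix ι ι ℝ} (hKK' : loewnerLE K K') :
    loewnerLE (qMatrix μ A N K) (qMatrix μ A N K') :=
  loewnerLE_matExp (integrable_qMatrix_integrand_apply hAN hmom K)
    (integrable_qMatrix_integrand_apply hAN hmom K') fun ω => by
      rw [loewnerLE, add_sub_add_left_eq_sub, ← Matrix.sub_mul, ← Matrix.mul_sub]
      exact hKK'.transpose_mul_mul_same _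

lemma qMatrix_posDef (hN : (matExp μ N).PosDef) {K : Matrix ι ι ℝ} (hK : K.PosSemidef) :
    (qMatrix μ A N K).PosDef := by
  have hle : loewnerLE (matExp μ N) (qMatrix μ A N K) :=
    loewnerLE_matExp (fun i j => by simpa using integrable_qMatrix_integrand_apply hAN hmom 0 i j)
      (integrable_qMatrix_integrand_apply hAN hmom K)
      fun ω => by simpa [loewnerLE] using hK.transpose_mul_mul_same (A ω)
  simpa using hN.add_posSemidef hle

end QMatrix

theorem Kseq_le_of_ARE_solution_general
    {n m : ℕ} {Ω : Type*} [MeasurableSpace Ω]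
    (μpr : Measure Ω) [IsProbabilityMeasure μpr]
    (A : ℕ → Ω → Matrix (Fin n) (Fin n ⊕ Fin m) ℝ)
    (N : ℕ → Ω → Matrix (Fin n ⊕ Fin m) (Fin n ⊕ Fin m) ℝ)
    (hmeas : ∀ t : ℕ, Measurable fun ω => (A (t + 1) ω, N (t + 1) ω))
    (hmom : Integrable
      (fun ω => specNorm (N 1 ω) ^ 2 + specNorm ((A 1 ω)ᵀ * A 1 ω) ^ 2) μpr)
    (hENpos : (matExp μpr (N 1)).PosDef)
    (Ktil : Matrix (Fin n) (Fin n) ℝ) (hKtil : Ktil.PosSemidef)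
    (hsol : Ktil = piMap (matExp μpr (fun ω => N 1 ω + (A 1 ω)ᵀ * Ktil * A 1 ω))) :
    ∀ t : ℕ, loewnerLE (Kseq μpr A N t) Ktil := by
  have hq : ∀ K, K.PosSemidef → (qMatrix μpr (A 1) (N 1) K).PosDef := fun K hK =>
    qMatrix_posDef (hmeas 0) hmom hENpos hK
  suffices h : ∀ t, (Kseq μpr A N t).PosSemidef ∧ loewnerLE (Kseq μpr A N t) Ktil from
    fun t => (h t).2
  intro t
  induction t with
  | zero => exact ⟨PosSemidef.zero, by simpa [loewnerLE, Kseq] using hKtil⟩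
  | succ t ih =>
    obtain ⟨hK, hKle⟩ := ih
    have hP := hq _ hK
    have hQ := hq _ hKtil
    refine ⟨hP.posSemidef.piMap hP.toBlocks₂₂.isUnit_det, ?_⟩
    rw [hsol]
    exact piMap_mono hP.isHermitian hP.toBlocks₂₂ hQ.isHermitian hQ.toBlocks₂₂.isUnit_det
      (qMatrix_mono (hmeas 0) hmom hKle)

/-- Any psd solution of the ARE dominates the Riccati iteration. -/
theorem Kseq_le_of_ARE_solution
    {n m : ℕ} {Ω : Type*} [MeasurableSpace Ω]
    (μpr : Measure Ω) [IsProbabilityMeasure μpr]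
    (A : ℕ → Ω → Matrix (Fin n) (Fin n ⊕ Fin m) ℝ)
    (N : ℕ → Ω → Matrix (Fin n ⊕ Fin m) (Fin n ⊕ Fin m) ℝ)
    (hmeas : ∀ t : ℕ, Measurable fun ω => (A (t + 1) ω, N (t + 1) ω))
    (hindep : ProbabilityTheory.iIndepFun
      (fun (t : ℕ) (ω : Ω) => (A (t + 1) ω, N (t + 1) ω)) μpr)
    (hident : ∀ t : ℕ, ProbabilityTheory.IdentDistrib
      (fun ω => (A (t + 1) ω, N (t + 1) ω)) (fun ω => (A 1 ω, N 1 ω)) μpr μpr)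
    (hNpsd : ∀ (t : ℕ) (ω : Ω), (N (t + 1) ω).PosSemidef)
    (hmom : Integrable
      (fun ω => specNorm (N 1 ω) ^ 2 + specNorm ((A 1 ω)ᵀ * A 1 ω) ^ 2) μpr)
    (hENpos : (matExp μpr (N 1)).PosDef)
    (Ktil : Matrix (Fin n) (Fin n) ℝ) (hKtil : Ktil.PosSemidef)
    (hsol : Ktil = piMap (matExp μpr (fun ω => N 1 ω + (A 1 ω)ᵀ * Ktil * A 1 ω))) :
    ∀ t : ℕ, loewnerLE (Kseq μpr A N t) Ktil :=
  Kseq_le_of_ARE_solution_general μpr A N hmeas hmom hENpos Ktil hKtil hsol
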